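/- arXiv:1609.01007 — 2 statements merged into one kernel-verified Lean document; each statement's English description precedes it below -/
import Mathlib

section
/- Let G be a compact subgroup of GL(m,ℝ) with Haar probability measure H, let x₁, …, x_J ∈ S^{m−1} have pairwise disjoint orbits G·x₁, …, G·x_J, and let n_j denote the number of connected components of G·x_j. Define Λ(B) = Σ_{j=1}^J ∫_G j·n_j · 1_{x_j ∈ gB} H(dg). Then the support of Λ equals the union of the orbits: supp(Λ) = ⋃_{j=1}^J G·x_j. -/
/-!
The image `K` of `G` in `GL(m, ℝ)` is compact, and Cartan's argument shows it is locally
exponential: every element of `K` near `1` is `exp X` with `t ↦ exp (t • X)` a path in `K`. Hence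
the connected components of `K` are open, so finitely many, and each orbit, a continuous image of
`K`, has `n_j ≥ 1` components. So `Λ U` is a sum of the masses `μ {g | g⁻¹ x_j ∈ U}` with nonzero
weights, and since a Haar measure charges nonempty open sets, `Λ U > 0` exactly when `U` meets
an orbit. The union of the compact orbits is closed.
-/

open Filter Topology NormedSpace

theorem tendsto_intFloor_mul_div_atTop (t : ℝ) :
    Tendsto (fun x : ℝ => (⌊t * x⌋ : ℝ) / x) atTop (𝓝 t) := by
  have hlow : ∀ᶠ x : ℝ in atTop, t - x⁻¹ ≤ (⌊t * x⌋ : ℝ) / x := by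
    filter_upwards [eventually_gt_atTop 0] with x hx
    rw [le_div_iff₀ hx, sub_mul, inv_mul_cancel₀ hx.ne']
    exact (Int.sub_one_lt_floor _).le
  have hup : ∀ᶠ x : ℝ in atTop, (⌊t * x⌋ : ℝ) / x ≤ t := by
    filter_upwards [eventually_gt_atTop 0] with x hx
    rw [div_le_iff₀ hx]
    exact Int.floor_le _
  have hlim : Tendsto (fun x : ℝ => t - x⁻¹) atTop (𝓝 t) := by
    simpa using tendsto_inv_atTop_zero.const_sub t
  exact tendsto_of_tendsto_of_tendsto_of_le_of_le' hlim tendsto_const_nhds hlow hup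

theorem HasStrictFDerivAt.exists_rightInverse {𝕜 E : Type*} [NontriviallyNormedField 𝕜]
    [NormedAddCommGroup E] [NormedSpace 𝕜 E] [CompleteSpace E] {f : E → E} {a : E}
    (hf : HasStrictFDerivAt f (ContinuousLinearMap.id 𝕜 E) a) :
    ∃ g : E → E, HasStrictFDerivAt g (ContinuousLinearMap.id 𝕜 E) (f a) ∧ g (f a) = a ∧
      ∀ᶠ y in 𝓝 (f a), f (g y) = y :=
  ⟨hf.localInverse f (ContinuousLinearEquiv.refl 𝕜 E) a, hf.to_localInverse (f' := .refl 𝕜 E),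
    hf.localInverse_apply_image (f' := .refl 𝕜 E), hf.eventually_right_inverse (f' := .refl 𝕜 E)⟩

section BanachAlgebra

variable {A : Type*} [NormedRing A] [NormedAlgebra ℝ A] [CompleteSpace A]

def lieAlgebraOf (K : Set A) : Set A := {X | ∀ t : ℝ, exp (t • X) ∈ K}

namespace Submonoid

variable {K : Submonoid A}

theorem exp_zsmul_mem (hinv : ∀ a ∈ K, ∃ b ∈ K, a * b = 1 ∧ b * a = 1) {z : A}
    (hz : exp z ∈ K) (k : ℤ) : exp (k • z) ∈ K := by
  let +nondep : NormedAlgebra ℚ A := .restrictScalars ℚ ℝ A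
  have hneg : exp (-z) ∈ K := by
    obtain ⟨b, hbK, hzb, -⟩ := hinv _ hz
    have hleft : exp (-z) * exp z = 1 := by
      rw [← exp_add_of_commute (Commute.refl z).neg_left, neg_add_cancel, exp_zero]
    rwa [left_inv_eq_right_inv hleft hzb]
  obtain ⟨n, rfl | rfl⟩ := k.eq_nat_or_neg
  · rw [natCast_zsmul, exp_nsmul]
    exact pow_mem hz n
  · rw [neg_smul, ← smul_neg, natCast_zsmul, exp_nsmul]
    exact pow_mem hneg n

theorem mem_lieAlgebraOf_of_tendsto (hKc : IsClosed (K : Set A))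
    (hinv : ∀ a ∈ K, ∃ b ∈ K, a * b = 1 ∧ b * a = 1) {α : Type*} {l : Filter α} [l.NeBot]
    {c : α → ℝ} {Z : α → A} {W : A} (hc : Tendsto c l atTop) (hZK : ∀ᶠ i in l, exp (Z i) ∈ K)
    (hZ : Tendsto (fun i => c i • Z i) l (𝓝 W)) : W ∈ lieAlgebraOf (K : Set A) := by
  let +nondep : NormedAlgebra ℚ A := .restrictScalars ℚ ℝ A
  intro t
  -- `⌊t c⌋ • Z → t • W`, and `exp (⌊t c⌋ • Z) = exp Z ^ ⌊t c⌋ ∈ K`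
  have hratio := (tendsto_intFloor_mul_div_atTop t).comp hc
  have hlim : Tendsto (fun i => ⌊t * c i⌋ • Z i) l (𝓝 (t • W)) := by
    refine (hratio.smul hZ).congr' ?_
    filter_upwards [hc.eventually_gt_atTop 0] with i hi
    simp only [Function.comp_apply, smul_smul, div_mul_cancel₀ _ hi.ne', Int.cast_smul_eq_zsmul]
  refine hKc.mem_of_tendsto (exp_continuous.tendsto _ |>.comp hlim) ?_
  filter_upwards [hZK] with i hi
  exact exp_zsmul_mem hinv hi _

theorem add_mem_lieAlgebraOf (hKc : IsClosed (K : Set A))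
    (hinv : ∀ a ∈ K, ∃ b ∈ K, a * b = 1 ∧ b * a = 1) {X Y : A}
    (hX : X ∈ lieAlgebraOf (K : Set A)) (hY : Y ∈ lieAlgebraOf (K : Set A)) :
    X + Y ∈ lieAlgebraOf (K : Set A) := by
  let +nondep : NormedAlgebra ℚ A := .restrictScalars ℚ ℝ A
  obtain ⟨log, hlog, hlog1, hexplog⟩ :=
    (hasStrictFDerivAt_exp_zero (𝕂 := ℝ) (𝔸 := A)).exists_rightInverse
  rw [exp_zero] at hlog hlog1 hexplog
  set F : A × A → A := fun p => log (exp p.1 * exp p.2)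
  have hmul : HasFDerivAt (fun p : A × A => exp p.1 * exp p.2)
      (ContinuousLinearMap.fst ℝ A A + ContinuousLinearMap.snd ℝ A A) 0 := by
    have h1 : HasFDerivAt (fun p : A × A => exp p.1) ((1 : A →L[ℝ] A).comp
        (ContinuousLinearMap.fst ℝ A A)) 0 := hasFDerivAt_exp_zero.comp _ hasFDerivAt_fst
    have h2 : HasFDerivAt (fun p : A × A => exp p.2) ((1 : A →L[ℝ] A).comp
        (ContinuousLinearMap.snd ℝ A A)) 0 := hasFDerivAt_exp_zero.comp _ hasFDerivAt_snd
    refine (h1.mul' h2).congr_fderiv ?_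
    ext p <;> simp [exp_zero]
  have hF : HasFDerivAt F (ContinuousLinearMap.fst ℝ A A + ContinuousLinearMap.snd ℝ A A) 0 := by
    have hlog' : HasFDerivAt log (ContinuousLinearMap.id ℝ A) (exp (0 : A) * exp 0) := by
      simpa [exp_zero] using hlog.hasFDerivAt
    exact hlog'.comp (0 : A × A) hmul
  -- `log (exp (X / n) * exp (Y / n)) = (X + Y) / n + o(1 / n)`
  have hlim := hF.lim (X, Y) (c := fun n : ℕ => (n : ℝ)) (l := atTop)
    (by simpa using tendsto_natCast_atTop_atTop)
  simp only [zero_add, F, Prod.fst_zero, Prod.snd_zero, exp_zero, mul_one, hlog1, sub_zero,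
    Prod.smul_mk] at hlim
  refine mem_lieAlgebraOf_of_tendsto hKc hinv tendsto_natCast_atTop_atTop ?_ (by simpa using hlim)
  have hone : Tendsto (fun n : ℕ => exp ((n : ℝ)⁻¹ • X) * exp ((n : ℝ)⁻¹ • Y)) atTop (𝓝 1) := by
    have h0 : Tendsto (fun n : ℕ => (n : ℝ)⁻¹) atTop (𝓝 0) :=
      tendsto_inv_atTop_zero.comp tendsto_natCast_atTop_atTop
    simpa [exp_zero] using ((h0.smul_const X).exp).mul ((h0.smul_const Y).exp)
  filter_upwards [hone.eventually hexplog] with n hn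
  rw [hn]
  exact mul_mem (hX _) (hY _)

section FiniteDimensional

variable [FiniteDimensional ℝ A]

theorem eventually_eq_zero_of_exp_mem (hKc : IsClosed (K : Set A))
    (hinv : ∀ a ∈ K, ∃ b ∈ K, a * b = 1 ∧ b * a = 1) {Q : Submodule ℝ A}
    (hQ : ∀ W ∈ Q, W ∈ lieAlgebraOf (K : Set A) → W = 0) :
    ∀ᶠ Y in 𝓝 (0 : A), Y ∈ Q → exp Y ∈ K → Y = 0 := by
  -- otherwise the directions of a sequence of counterexamples accumulate at a unit vector of `Q`
  -- that lies in the Lie algebra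
  by_contra hcon
  obtain ⟨Y, hY0, hYQK⟩ := frequently_iff_seq_forall.mp (not_eventually.mp hcon)
  simp only [Classical.not_imp] at hYQK
  choose hYQ hYK hYne using hYQK
  have hsphere : ∀ n, ‖Y n‖⁻¹ • Y n ∈ Metric.sphere (0 : A) 1 := fun n => by
    simp [norm_smul, hYne n]
  obtain ⟨W, hW1, φ, hφ, hWlim⟩ := (isCompact_sphere (0 : A) 1).tendsto_subseq hsphere
  have hWL : W ∈ lieAlgebraOf (K : Set A) := by
    have hnorm : Tendsto (fun n => ‖Y (φ n)‖) atTop (𝓝[>] 0) :=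
      tendsto_nhdsWithin_iff.mpr ⟨by simpa using (hY0.comp hφ.tendsto_atTop).norm,
        Eventually.of_forall fun n => norm_pos_iff.mpr (hYne _)⟩
    exact mem_lieAlgebraOf_of_tendsto hKc hinv (tendsto_inv_nhdsGT_zero.comp hnorm)
      (Eventually.of_forall fun n => hYK _) hWlim
  have hWQ : W ∈ Q :=
    (Submodule.closed_of_finiteDimensional Q).mem_of_tendsto hWlim
      (Eventually.of_forall fun n => Q.smul_mem _ (hYQ _))
  simp [hQ W hWQ hWL] at hW1

theorem eventually_exists_exp_eq (hKc : IsClosed (K : Set A))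
    (hinv : ∀ a ∈ K, ∃ b ∈ K, a * b = 1 ∧ b * a = 1) :
    ∀ᶠ a in 𝓝 (1 : A), a ∈ K → ∃ X ∈ lieAlgebraOf (K : Set A), exp X = a := by
  let +nondep : NormedAlgebra ℚ A := .restrictScalars ℚ ℝ A
  let L : Submodule ℝ A :=
    { carrier := lieAlgebraOf (K : Set A)
      add_mem' := add_mem_lieAlgebraOf hKc hinv
      zero_mem' := fun t => by simp [exp_zero, one_mem]
      smul_mem' := fun c X hX t => by simpa [smul_smul] using hX (t * c) }
  -- `Ψ (z) = exp (P z) * exp (P' z)` is a local diffeomorphism at `0`; for `a = Ψ z ∈ K` we get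
  -- `exp (P' z) = exp (-P z) * a ∈ K`, which forces `P' z = 0`.
  obtain ⟨Q, hLQ⟩ := L.exists_isCompl
  let P : A →L[ℝ] A := LinearMap.toContinuousLinearMap (L.projection Q hLQ)
  let P' : A →L[ℝ] A := LinearMap.toContinuousLinearMap (Q.projection L hLQ.symm)
  let Ψ : A → A := fun z => exp (P z) * exp (P' z)
  have hΨ : HasStrictFDerivAt Ψ (ContinuousLinearMap.id ℝ A) 0 := by
    have hexp (T : A →L[ℝ] A) :
        HasStrictFDerivAt (fun z => exp (T z)) ((1 : A →L[ℝ] A).comp T) 0 := by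
      have h := hasStrictFDerivAt_exp_zero (𝕂 := ℝ) (𝔸 := A)
      rw [← T.map_zero] at h
      exact h.comp 0 T.hasStrictFDerivAt
    refine ((hexp P).mul' (hexp P')).congr_fderiv ?_
    ext z
    simp [exp_zero, P, P', Submodule.projection_add_projection_eq_self]
  obtain ⟨g, hg, hg1, hΨg⟩ := hΨ.exists_rightInverse
  have hΨ0 : Ψ 0 = 1 := by simp [Ψ, exp_zero]
  rw [hΨ0] at hg hg1 hΨg
  have hP'g : Tendsto (fun a => P' (g a)) (𝓝 1) (𝓝 0) := by
    have h := (P'.continuous.tendsto _).comp hg.continuousAt.tendsto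
    rwa [hg1, map_zero] at h
  have hQ : ∀ W ∈ Q, W ∈ lieAlgebraOf (K : Set A) → W = 0 := fun W hWQ hWL =>
    (Submodule.disjoint_def.mp hLQ.disjoint) W hWL hWQ
  filter_upwards [hΨg, hP'g.eventually (eventually_eq_zero_of_exp_mem hKc hinv hQ)]
    with a ha hzero haK
  have hPL : P (g a) ∈ lieAlgebraOf (K : Set A) := Submodule.projection_apply_mem hLQ (g a)
  have hP'K : exp (P' (g a)) ∈ K := by
    have hcancel : exp (-P (g a)) * exp (P (g a)) = 1 := by
      rw [← exp_add_of_commute (Commute.refl _).neg_left, neg_add_cancel, exp_zero]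
    have : exp (P' (g a)) = exp (-P (g a)) * Ψ (g a) := by
      rw [← mul_assoc, hcancel, one_mul]
    rw [this, ha]
    exact mul_mem (by simpa using hPL (-1)) haK
  refine ⟨P (g a), hPL, ?_⟩
  calc exp (P (g a)) = Ψ (g a) := by
        simp [Ψ, hzero (Submodule.projection_apply_mem hLQ.symm (g a)) hP'K, exp_zero]
    _ = a := ha

theorem eventually_mem_connectedComponentIn (hKc : IsClosed (K : Set A))
    (hinv : ∀ a ∈ K, ∃ b ∈ K, a * b = 1 ∧ b * a = 1) {a : A} (ha : a ∈ K) :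
    ∀ᶠ b in 𝓝 a, b ∈ K → b ∈ connectedComponentIn (K : Set A) a := by
  let +nondep : NormedAlgebra ℚ A := .restrictScalars ℚ ℝ A
  obtain ⟨a', ha'K, haa', ha'a⟩ := hinv a ha
  have hlim : Tendsto (fun b => a' * b) (𝓝 a) (𝓝 1) := by
    simpa [ha'a] using (continuous_const_mul a').tendsto a
  filter_upwards [hlim.eventually (eventually_exists_exp_eq hKc hinv)] with b hb hbK
  obtain ⟨X, hXL, hXb⟩ := hb (mul_mem ha'K hbK)
  have hpath : IsPreconnected (Set.range fun t : ℝ => a * exp (t • X)) :=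
    isPreconnected_range (by fun_prop)
  refine hpath.subset_connectedComponentIn ⟨0, by simp [exp_zero]⟩ ?_
    ⟨1, by simp [hXb, ← mul_assoc, haa']⟩
  rintro _ ⟨t, rfl⟩
  exact mul_mem ha (hXL t)

theorem finite_connectedComponents (hK : IsCompact (K : Set A))
    (hinv : ∀ a ∈ K, ∃ b ∈ K, a * b = 1 ∧ b * a = 1) : Finite (ConnectedComponents K) := by
  have : CompactSpace K := isCompact_iff_compactSpace.mp hK
  have : DiscreteTopology (ConnectedComponents K) := by
    refine ConnectedComponents.discreteTopology_iff.mpr fun a =>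
      isOpen_iff_mem_nhds.mpr fun b hb => ?_
    rw [connectedComponent_eq hb]
    filter_upwards [(continuous_subtype_val.tendsto b).eventually
      (eventually_mem_connectedComponentIn hK.isClosed hinv b.2)] with y hy
    simpa [connectedComponentIn_eq_image b.2, Subtype.val_injective.mem_set_image] using hy y.2
  exact finite_of_compact_of_discrete

end FiniteDimensional

end Submonoid

end BanachAlgebra

open MeasureTheory Matrix Set
open scoped ENNReal

theorem Matrix.GeneralLinearGroup.image_mulVec_eq_preimage {n R : Type*} [Fintype n]
    [DecidableEq n] [CommRing R] (u : GL n R) (U : Set (n → R)) :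
    (fun v => (u : Matrix n n R) *ᵥ v) '' U =
      (fun v => ((u⁻¹ : GL n R) : Matrix n n R) *ᵥ v) ⁻¹' U :=
  congrFun (image_eq_preimage_of_inverse (fun v => by simp [mulVec_mulVec])
    (fun v => by simp [mulVec_mulVec])) U

theorem setOf_forall_isOpen_sum_ne_zero_eq_iUnion_range {ι G X : Type*} [Fintype ι]
    [TopologicalSpace G] [CompactSpace G] [MeasurableSpace G] [TopologicalSpace X] [T2Space X]
    (μ : Measure G) [μ.IsOpenPosMeasure] {c : ι → ℝ≥0∞} (hc : ∀ i, c i ≠ 0) {f : ι → G → X}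
    (hf : ∀ i, Continuous (f i)) :
    {v | ∀ U, IsOpen U → v ∈ U → ∑ i, c i * μ (f i ⁻¹' U) ≠ 0} = ⋃ i, range (f i) := by
  ext v
  constructor
  · intro hv
    by_contra hnot
    have hopen : IsOpen (⋃ i, range (f i))ᶜ :=
      (isClosed_iUnion_of_finite fun i => (isCompact_range (hf i)).isClosed).isOpen_compl
    refine hv _ hopen hnot (Finset.sum_eq_zero fun i _ => ?_)
    have hempty : f i ⁻¹' (⋃ i, range (f i))ᶜ = ∅ :=
      eq_empty_of_forall_notMem fun g hg => hg (mem_iUnion.mpr ⟨i, g, rfl⟩)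
    rw [hempty, measure_empty, mul_zero]
  · intro hv U hU hvU h0
    obtain ⟨i, g, rfl⟩ := mem_iUnion.mp hv
    have hpos : μ (f i ⁻¹' U) ≠ 0 := (hU.preimage (hf i)).measure_ne_zero μ ⟨g, hvU⟩
    exact mul_ne_zero (hc i) hpos (Finset.sum_eq_zero_iff.mp h0 i (Finset.mem_univ i))

theorem Matrix.finite_connectedComponents_range_mulVec {n G : Type*} [Fintype n] [DecidableEq n]
    [Group G] [TopologicalSpace G] [CompactSpace G] (ψ : G →* Matrix n n ℝ) (hψ : Continuous ψ)
    (v : n → ℝ) : Finite (ConnectedComponents (range fun g => ψ g *ᵥ v)) := by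
  -- any Banach algebra norm inducing the product topology will do
  let _ : NormedRing (Matrix n n ℝ) := Matrix.linftyOpNormedRing
  let _ : NormedAlgebra ℝ (Matrix n n ℝ) := Matrix.linftyOpNormedAlgebra
  have hK : Finite (ConnectedComponents (range ψ)) := by
    rw [← MonoidHom.coe_mrange]
    refine Submonoid.finite_connectedComponents ?_ ?_
    · rw [MonoidHom.coe_mrange]
      exact isCompact_range hψ
    · rintro _ ⟨g, rfl⟩
      exact ⟨ψ g⁻¹, ⟨g⁻¹, rfl⟩, by simp [← map_mul], by simp [← map_mul]⟩
  have hmaps : MapsTo (· *ᵥ v) (range ψ) (range fun g => ψ g *ᵥ v) := by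
    rintro _ ⟨g, rfl⟩
    exact ⟨g, rfl⟩
  have hsurj : Function.Surjective (hmaps.restrict _ _ _) := by
    rintro ⟨_, g, rfl⟩
    exact ⟨⟨ψ g, g, rfl⟩, rfl⟩
  have hcont : Continuous (hmaps.restrict _ _ _) :=
    (continuous_id.matrix_mulVec continuous_const).restrict hmaps
  exact Finite.of_surjective _ (hcont.connectedComponentsMap_surjective hsurj)

theorem stmt17_general (m J : ℕ) (G : Type*) [Group G] [TopologicalSpace G] [IsTopologicalGroup G]
    [CompactSpace G] [MeasurableSpace G] [BorelSpace G]
    (ρ : G →* GL (Fin m) ℝ)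
    (hρ : Continuous fun g : G => ((ρ g : GL (Fin m) ℝ) : Matrix (Fin m) (Fin m) ℝ))
    (μ : Measure G) (hprob : IsProbabilityMeasure μ)
    (hinvl : μ.IsMulLeftInvariant)
    (x : Fin J → Fin m → ℝ)
    (orb : Fin J → Set (Fin m → ℝ))
    (horb : ∀ j, orb j =
      {v : Fin m → ℝ | ∃ g : G, ((ρ g : GL (Fin m) ℝ) : Matrix (Fin m) (Fin m) ℝ).mulVec (x j) = v})
    (n : Fin J → ℕ)
    (hn : ∀ j, n j = Nat.card (ConnectedComponents (orb j))) :
    let act : G → Set (Fin m → ℝ) → Set (Fin m → ℝ) := fun g B =>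
      (fun v => ((ρ g : GL (Fin m) ℝ) : Matrix (Fin m) (Fin m) ℝ).mulVec v) '' B
    let Λ : Set (Fin m → ℝ) → ENNReal := fun B =>
      ∑ j : Fin J, (((j.val + 1) * n j : ℕ) : ENNReal) * μ {g : G | x j ∈ act g B}
    {v : Fin m → ℝ | ∀ U : Set (Fin m → ℝ), IsOpen U → v ∈ U → Λ U ≠ 0} =
      ⋃ j : Fin J, orb j := by
  intro act Λ
  have : μ.IsOpenPosMeasure :=
    isOpenPosMeasure_of_mulLeftInvariant_of_compact univ isCompact_univ (by simp)
  let ψ : G →* Matrix (Fin m) (Fin m) ℝ := (Units.coeHom _).comp ρ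
  have horb' : ∀ j, orb j = range fun g => ψ g *ᵥ x j := fun j => by
    rw [horb j]
    rfl
  have hn0 : ∀ j, n j ≠ 0 := fun j => by
    have hfin : Finite (ConnectedComponents (orb j)) := by
      rw [horb' j]
      exact Matrix.finite_connectedComponents_range_mulVec ψ hρ (x j)
    have hx : x j ∈ orb j := by
      rw [horb j]
      exact ⟨1, by simp⟩
    rw [hn j]
    exact Nat.card_ne_zero.mpr ⟨⟨ConnectedComponents.mk ⟨x j, hx⟩⟩, hfin⟩
  let f : Fin J → G → Fin m → ℝ := fun j g => ψ g⁻¹ *ᵥ x j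
  have hf : ∀ j, Continuous (f j) := fun j =>
    (hρ.comp continuous_inv).matrix_mulVec continuous_const
  have hrange : ∀ j, range (f j) = orb j := fun j => by
    rw [horb' j]
    exact (Equiv.inv G).surjective.range_comp (fun g => ψ g *ᵥ x j)
  have hact : ∀ j U, {g | x j ∈ act g U} = f j ⁻¹' U := fun j U => by
    ext g
    simp [act, f, ψ, Matrix.GeneralLinearGroup.image_mulVec_eq_preimage]
  simp only [Λ, hact, ← iUnion_congr hrange]
  exact setOf_forall_isOpen_sum_ne_zero_eq_iUnion_range μ
    (fun j => by exact_mod_cast Nat.mul_ne_zero j.val.succ_ne_zero (hn0 j)) hf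

/-- Let `G` be a compact group acting linearly on `ℝ^m` via `ρ : G → GL(m,ℝ)` with Haar
probability measure `μ`.  Let `x₁, …, x_J` be points of the unit sphere with pairwise
disjoint orbits, `n_j` the number of connected components of the orbit of `x_j`, and
`Λ(B) = Σ_j ∫_G j·n_j·1_{x_j ∈ gB} μ(dg)`.  Then the support of `Λ` is the union of
the orbits. -/
theorem stmt17 (m J : ℕ) (G : Type*) [Group G] [TopologicalSpace G] [IsTopologicalGroup G]
    [CompactSpace G] [MeasurableSpace G] [BorelSpace G]
    (ρ : G →* GL (Fin m) ℝ)
    (hρ : Continuous fun g : G => ((ρ g : GL (Fin m) ℝ) : Matrix (Fin m) (Fin m) ℝ))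
    (μ : Measure G) (hprob : IsProbabilityMeasure μ)
    (hinvl : μ.IsMulLeftInvariant) (hinvr : μ.IsMulRightInvariant)
    (x : Fin J → Fin m → ℝ) (hsphere : ∀ j, ∑ i, (x j i) ^ 2 = 1)
    (orb : Fin J → Set (Fin m → ℝ))
    (horb : ∀ j, orb j =
      {v : Fin m → ℝ | ∃ g : G, ((ρ g : GL (Fin m) ℝ) : Matrix (Fin m) (Fin m) ℝ).mulVec (x j) = v})
    (hdisj : ∀ j₁ j₂ : Fin J, j₁ ≠ j₂ → Disjoint (orb j₁) (orb j₂))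
    (n : Fin J → ℕ)
    (hn : ∀ j, n j = Nat.card (ConnectedComponents (orb j))) :
    let act : G → Set (Fin m → ℝ) → Set (Fin m → ℝ) := fun g B =>
      (fun v => ((ρ g : GL (Fin m) ℝ) : Matrix (Fin m) (Fin m) ℝ).mulVec v) '' B
    let Λ : Set (Fin m → ℝ) → ENNReal := fun B =>
      ∑ j : Fin J, (((j.val + 1) * n j : ℕ) : ENNReal) * μ {g : G | x j ∈ act g B}
    {v : Fin m → ℝ | ∀ U : Set (Fin m → ℝ), IsOpen U → v ∈ U → Λ U ≠ 0} =
      ⋃ j : Fin J, orb j :=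
  stmt17_general m J G ρ hρ μ hprob hinvl x orb horb n hn
end

section
/- Any strictly decreasing chain G₀ ⊃ G₁ ⊃ G₂ ⊃ ⋯ of compact subgroups of GL(m,ℝ) (each properly contained in the previous one, each closed) must be finite. Equivalently, there is no infinite properly nested decreasing sequence of compact subgroups of GL(m,ℝ). -/
open Matrix MvPolynomial MeasureTheory Topology

variable {m : ℕ}
abbrev Mx (m : ℕ) := Matrix (Fin m) (Fin m) ℝ
abbrev ιx (m : ℕ) := Fin m × Fin m

noncomputable def ent (z : Mx m) : ιx m → ℝ := fun ij => z ij.1 ij.2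

lemma continuous_ent : Continuous (ent (m := m)) :=
  continuous_pi fun ij => continuous_id.matrix_elem ij.1 ij.2

noncomputable def Pof (p : MvPolynomial (ιx m) ℝ) : MvPolynomial (ιx m) (MvPolynomial (ιx m) ℝ) :=
  aeval (fun ij : ιx m => ∑ l, X (ij.1, l) * C (X (l, ij.2))) p

lemma eval_Pof (p : MvPolynomial (ιx m) ℝ) (A y : Mx m) :
    eval (ent y) (MvPolynomial.map (eval (ent A)) (Pof p)) = eval (ent (y * A)) p := by
  have h : ((eval (ent y)).comp ((MvPolynomial.map (eval (ent A) : MvPolynomial (ιx m) ℝ →+* ℝ)).comp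
      ((aeval (fun ij : ιx m => ∑ l, X (ij.1, l) * C (X (l, ij.2)))
        : MvPolynomial (ιx m) ℝ →ₐ[ℝ] MvPolynomial (ιx m) (MvPolynomial (ιx m) ℝ)) : _ →+* _)))
      = (eval (ent (y * A)) : MvPolynomial (ιx m) ℝ →+* ℝ) := by
    apply MvPolynomial.ringHom_ext
    · intro a; simp
    · intro ij; simp [ent, Matrix.mul_apply]
  exact RingHom.congr_fun h p

lemma aux_compact (G' : Subgroup (GL (Fin m) ℝ))
    (hK : IsCompact ((fun g : GL (Fin m) ℝ => (g : Mx m)) '' (G' : Set (GL (Fin m) ℝ)))) :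
    CompactSpace G' := by
  suffices h : IsCompact (G' : Set (GL (Fin m) ℝ)) from isCompact_iff_compactSpace.mp h
  have hemb : Topology.IsEmbedding (Units.embedProduct (Mx m)) :=
    ⟨Units.isInducing_embedProduct, Units.embedProduct_injective _⟩
  rw [hemb.isCompact_iff]
  have hinv : ContinuousOn (fun z : Mx m => z⁻¹)
      ((fun g : GL (Fin m) ℝ => (g : Mx m)) '' (G' : Set (GL (Fin m) ℝ))) := by
    intro z hz
    obtain ⟨g, _, rfl⟩ := hz
    apply ContinuousAt.continuousWithinAt
    apply continuousAt_matrix_inv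
    have hd : ((g : Mx m)).det ≠ 0 := ((Matrix.isUnit_iff_isUnit_det _).mp g.isUnit).ne_zero
    rw [Ring.inverse_eq_inv']
    exact continuousAt_inv₀ hd
  have himg : Units.embedProduct (Mx m) '' (G' : Set (GL (Fin m) ℝ)) =
      (fun z : Mx m => (z, MulOpposite.op z⁻¹)) ''
        ((fun g : GL (Fin m) ℝ => (g : Mx m)) '' (G' : Set (GL (Fin m) ℝ))) := by
    ext x
    constructor
    · rintro ⟨g, hg, rfl⟩
      exact ⟨(g : Mx m), ⟨g, hg, rfl⟩, by simp [Units.embedProduct, Matrix.coe_units_inv]⟩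
    · rintro ⟨z, ⟨g, hg, rfl⟩, rfl⟩
      exact ⟨g, hg, by simp [Units.embedProduct, Matrix.coe_units_inv]⟩
  rw [himg]
  exact hK.image_of_continuousOn (continuousOn_id.prodMk
    (MulOpposite.continuous_op.comp_continuousOn hinv))

lemma separation (G' : Subgroup (GL (Fin m) ℝ))
    (hK : IsCompact ((fun g : GL (Fin m) ℝ => (g : Mx m)) '' (G' : Set (GL (Fin m) ℝ))))
    (g₀ : GL (Fin m) ℝ) (hg₀ : g₀ ∉ G') :
    ∃ f : MvPolynomial (ιx m) ℝ,
      (∀ g : GL (Fin m) ℝ, g ∈ G' → eval (ent (g : Mx m)) f = 0) ∧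
      eval (ent (g₀ : Mx m)) f ≠ 0 := by
  classical
  set K : Set (Mx m) := (fun g : GL (Fin m) ℝ => (g : Mx m)) '' (G' : Set (GL (Fin m) ℝ)) with hKdef
  set X₀ : Mx m := (g₀ : Mx m) with hX₀
  set L : Set (Mx m) := (fun z => X₀ * z) '' K with hLdef
  have hLc : IsCompact L := hK.image (continuous_const.matrix_mul continuous_id)
  -- K and L are disjoint
  have hdisj : Disjoint K L := by
    rw [Set.disjoint_left]
    rintro z ⟨g₁, hg₁, rfl⟩ ⟨w, ⟨g₂, hg₂, rfl⟩, hzw⟩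
    apply hg₀
    have : (g₁ : Mx m) = ((g₀ * g₂ : GL (Fin m) ℝ) : Mx m) := by
      rw [Units.val_mul]; exact hzw.symm
    have hg : g₁ = g₀ * g₂ := Units.ext this
    have : g₀ = g₁ * g₂⁻¹ := by rw [hg]; group
    rw [this]; exact mul_mem hg₁ (inv_mem hg₂)
  -- the compact ambient space
  set S : Set (Mx m) := K ∪ L with hSdef
  have hSc : IsCompact S := hK.union hLc
  haveI : CompactSpace S := isCompact_iff_compactSpace.mp hSc
  -- Urysohn on S
  have hKS : K ⊆ S := Set.subset_union_left
  have hLS : L ⊆ S := Set.subset_union_right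
  have hK' : IsClosed ((Subtype.val : S → Mx m) ⁻¹' K) :=
    hK.isClosed.preimage continuous_subtype_val
  have hL' : IsClosed ((Subtype.val : S → Mx m) ⁻¹' L) :=
    hLc.isClosed.preimage continuous_subtype_val
  have hdisj' : Disjoint ((Subtype.val : S → Mx m) ⁻¹' K) ((Subtype.val : S → Mx m) ⁻¹' L) :=
    hdisj.preimage _
  obtain ⟨φ, hφK, hφL, hφ01⟩ := exists_continuous_zero_one_of_isClosed hK' hL' hdisj'
  -- the polynomial subalgebra of C(S, ℝ)
  have ccont : ∀ ij : ιx m, Continuous fun s : S => (s : Mx m) ij.1 ij.2 := fun ij =>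
    (continuous_id.matrix_elem ij.1 ij.2).comp continuous_subtype_val
  set coordFn : ιx m → C(S, ℝ) := fun ij => ⟨fun s => (s : Mx m) ij.1 ij.2, ccont ij⟩ with hcoord
  set Φ : MvPolynomial (ιx m) ℝ →ₐ[ℝ] C(S, ℝ) := aeval coordFn with hΦ
  have hΦeval : ∀ (p : MvPolynomial (ιx m) ℝ) (s : S), (Φ p) s = eval (ent (s : Mx m)) p := by
    intro p s
    induction p using MvPolynomial.induction_on with
    | C a => simp [hΦ]
    | add p q hp hq => simp [map_add, hp, hq]
    | mul_X p ij hp =>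
      simp only [_root_.map_mul, ContinuousMap.mul_apply, hp]
      simp [hΦ, hcoord, ent]
  have hsep : (Φ.range : Subalgebra ℝ C(S, ℝ)).SeparatesPoints := by
    intro s t hst
    have : (s : Mx m) ≠ (t : Mx m) := fun h => hst (Subtype.ext h)
    have : ∃ i j, (s : Mx m) i j ≠ (t : Mx m) i j := by
      by_contra h
      push_neg at h
      exact this (by ext i j; exact h i j)
    obtain ⟨i, j, hij⟩ := this
    exact ⟨_, ⟨coordFn (i, j), ⟨(X (i, j) : MvPolynomial (ιx m) ℝ), by simp [hΦ]⟩, rfl⟩, hij⟩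
  obtain ⟨⟨g, hgmem⟩, hnear⟩ :=
    ContinuousMap.exists_mem_subalgebra_near_continuousMap_of_separatesPoints
      Φ.range hsep φ (1/4) (by norm_num)
  obtain ⟨p, hp⟩ := hgmem
  have hgp : ∀ s : S, g s = eval (ent (s : Mx m)) p := by
    intro s
    rw [← hΦeval p s]
    exact (congrFun (congrArg DFunLike.coe (hp : Φ p = g)) s).symm
  -- pointwise bounds for p
  have hbound : ∀ s : S, |(g : C(S, ℝ)) s - φ s| ≤ 1/4 := by
    intro s
    calc |(g : C(S, ℝ)) s - φ s| = ‖((g : C(S, ℝ)) - φ) s‖ := by simp [Real.norm_eq_abs]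
    _ ≤ ‖(g : C(S, ℝ)) - φ‖ := ContinuousMap.norm_coe_le_norm _ s
    _ ≤ 1/4 := le_of_lt hnear
  have hpK : ∀ z ∈ K, |eval (ent z) p| ≤ 1/4 := by
    intro z hz
    have h1 := hbound ⟨z, hKS hz⟩
    rw [hφK (by exact hz)] at h1
    rw [hgp ⟨z, hKS hz⟩] at h1
    simpa using h1
  have hpL : ∀ z ∈ L, (3:ℝ)/4 ≤ eval (ent z) p := by
    intro z hz
    have h1 := hbound ⟨z, hLS hz⟩
    rw [hφL (by exact hz)] at h1
    rw [hgp ⟨z, hLS hz⟩] at h1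
    have h3 : (1 : ↑S → ℝ) ⟨z, hLS hz⟩ = 1 := rfl
    rw [h3] at h1
    have h2 := abs_le.mp h1
    linarith [h2.1]
  -- Part B : averaging over the Haar measure of the compact group G'
  haveI : CompactSpace G' := aux_compact G' hK
  haveI : Nonempty (G' : Subgroup (GL (Fin m) ℝ)) := ⟨1⟩
  haveI : SecondCountableTopology (Mx m) :=
    inferInstanceAs (SecondCountableTopology (Fin m → Fin m → ℝ))
  haveI : SecondCountableTopology (Mx m)ᵐᵒᵖ :=
    ((MulOpposite.opHomeomorph : Mx m ≃ₜ (Mx m)ᵐᵒᵖ)).symm.isInducing.secondCountableTopology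
  haveI : SecondCountableTopology (GL (Fin m) ℝ) :=
    Units.isInducing_embedProduct.secondCountableTopology
  letI : MeasurableSpace G' := borel G'
  haveI : BorelSpace G' := ⟨rfl⟩
  set μ : Measure G' := Measure.haarMeasure (⊤ : TopologicalSpace.PositiveCompacts G') with hμ
  haveI : IsProbabilityMeasure μ := ⟨by
    rw [← TopologicalSpace.PositiveCompacts.coe_top (α := G')]
    exact Measure.haarMeasure_self⟩
  have integ : ∀ F : G' → ℝ, Continuous F → Integrable F μ := fun F hF => by
    have h := hF.continuousOn.integrableOn_compact (isCompact_univ) (μ := μ)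
    rwa [integrableOn_univ] at h
  have hcont : Continuous fun h : G' => ent (((h : GL (Fin m) ℝ)) : Mx m) :=
    continuous_ent.comp (Units.continuous_val.comp continuous_subtype_val)
  set q : MvPolynomial (ιx m) ℝ := ∑ d ∈ (Pof p).support,
    monomial d (∫ h : G', eval (ent (((h : GL (Fin m) ℝ)) : Mx m)) (coeff d (Pof p)) ∂μ) with hq
  have evalq : ∀ y : Mx m, eval (ent y) q =
      ∫ h : G', eval (ent (y * (((h : GL (Fin m) ℝ)) : Mx m))) p ∂μ := by
    intro y
    have hint : ∀ d ∈ (Pof p).support, Integrable (fun h : G' =>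
        eval (ent (((h : GL (Fin m) ℝ)) : Mx m)) (coeff d (Pof p)) *
          (d.prod fun i e => ent y i ^ e)) μ := fun d _ =>
      integ _ (((MvPolynomial.continuous_eval (coeff d (Pof p))).comp hcont).mul continuous_const)
    calc eval (ent y) q
        = ∑ d ∈ (Pof p).support, (∫ h : G', eval (ent (((h : GL (Fin m) ℝ)) : Mx m))
            (coeff d (Pof p)) ∂μ) * (d.prod fun i e => ent y i ^ e) := by
          rw [hq, map_sum]; exact Finset.sum_congr rfl fun d _ => eval_monomial
      _ = ∑ d ∈ (Pof p).support, ∫ h : G', eval (ent (((h : GL (Fin m) ℝ)) : Mx m))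
            (coeff d (Pof p)) * (d.prod fun i e => ent y i ^ e) ∂μ :=
          Finset.sum_congr rfl fun d _ => (integral_mul_const _ _).symm
      _ = ∫ h : G', ∑ d ∈ (Pof p).support, eval (ent (((h : GL (Fin m) ℝ)) : Mx m))
            (coeff d (Pof p)) * (d.prod fun i e => ent y i ^ e) ∂μ :=
          (integral_finset_sum _ hint).symm
      _ = ∫ h : G', eval (ent (y * (((h : GL (Fin m) ℝ)) : Mx m))) p ∂μ := by
          congr 1
          funext h
          rw [← eval_Pof p (((h : GL (Fin m) ℝ)) : Mx m) y, eval_map, eval₂_eq]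
          exact Finset.sum_congr rfl fun d _ => by rw [Finsupp.prod]
  set F : G' → ℝ := fun h => eval (ent (((h : GL (Fin m) ℝ)) : Mx m)) p with hF
  set c₀ : ℝ := ∫ h : G', F h ∂μ with hc₀
  have hGconst : ∀ g : GL (Fin m) ℝ, g ∈ G' → eval (ent (g : Mx m)) q = c₀ := by
    intro g hg
    rw [evalq]
    have h2 : (∫ h : G', eval (ent ((g : Mx m) * (((h : GL (Fin m) ℝ)) : Mx m))) p ∂μ)
        = ∫ h : G', F ((⟨g, hg⟩ : G') * h) ∂μ := by
      apply integral_congr_ae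
      apply MeasureTheory.ae_of_all
      intro h
      simp [hF, Units.val_mul]
    rw [h2, integral_mul_left_eq_self F (⟨g, hg⟩ : G')]
  have hc₀bound : |c₀| ≤ 1/4 := by
    have hb : ∀ᵐ h ∂μ, ‖F h‖ ≤ 1/4 :=
      MeasureTheory.ae_of_all _ fun h => by
        simpa [Real.norm_eq_abs] using hpK _ ⟨(h : GL (Fin m) ℝ), h.2, rfl⟩
    have hn := norm_integral_le_of_norm_le_const hb
    rw [measureReal_def, measure_univ, ENNReal.toReal_one, mul_one] at hn
    simpa [Real.norm_eq_abs] using hn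
  have hX₀val : (3:ℝ)/4 ≤ eval (ent X₀) q := by
    rw [evalq]
    have hptwise : ∀ h : G', (3:ℝ)/4 ≤ eval (ent (X₀ * (((h : GL (Fin m) ℝ)) : Mx m))) p :=
      fun h => hpL _ ⟨((h : GL (Fin m) ℝ) : Mx m), ⟨(h : GL (Fin m) ℝ), h.2, rfl⟩, rfl⟩
    have hcont2 : Continuous fun h : G' =>
        eval (ent (X₀ * (((h : GL (Fin m) ℝ)) : Mx m))) p :=
      (MvPolynomial.continuous_eval p).comp (continuous_ent.comp
        (continuous_const.matrix_mul (Units.continuous_val.comp continuous_subtype_val)))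
    calc (3:ℝ)/4 = ∫ _h : G', (3:ℝ)/4 ∂μ := by simp
      _ ≤ _ := integral_mono (integrable_const _) (integ _ hcont2) hptwise
  refine ⟨q - C c₀, ?_, ?_⟩
  · intro g hg
    rw [map_sub, hGconst g hg, eval_C, sub_self]
  · rw [map_sub, eval_C]
    intro hcontra
    have hc₀' := abs_le.mp hc₀bound
    have : eval (ent X₀) q = c₀ := by linarith [sub_eq_zero.mp hcontra]
    linarith [hc₀'.2, hX₀val]

/-- There is no infinite strictly decreasing chain of compact subgroups of `GL(m,ℝ)`. -/
theorem stmt18 (m : ℕ) :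
    ¬ ∃ G : ℕ → Subgroup (GL (Fin m) ℝ),
      (∀ k, IsCompact ((fun g : GL (Fin m) ℝ => (g : Matrix (Fin m) (Fin m) ℝ)) ''
        (G k : Set (GL (Fin m) ℝ)))) ∧
      (∀ k, G (k + 1) < G k) := by
  rintro ⟨G, hcomp, hlt⟩
  classical
  have hA : StrictAnti G := strictAnti_nat_of_succ_lt hlt
  let I : ℕ →o Submodule (MvPolynomial (ιx m) ℝ) (MvPolynomial (ιx m) ℝ) :=
    ⟨fun k =>
      { carrier := {f | ∀ g : GL (Fin m) ℝ, g ∈ G k → eval (ent (g : Mx m)) f = 0}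
        add_mem' := fun hf hg g hgk => by
          simp only [Set.mem_setOf_eq] at *
          simp [map_add, hf g hgk, hg g hgk]
        zero_mem' := fun g hgk => by simp
        smul_mem' := fun c f hf g hgk => by
          simp only [Set.mem_setOf_eq] at *
          simp [smul_eq_mul, hf g hgk] },
      fun k l hkl f hf g hgl => hf g (hA.antitone hkl hgl)⟩
  obtain ⟨n, hn⟩ := monotone_stabilizes_iff_noetherian.mpr inferInstance I
  have hnn : I n = I (n + 1) := hn (n + 1) (Nat.le_succ n)
  obtain ⟨g₀, hg₀n, hg₀n1⟩ := SetLike.exists_of_lt (hlt n)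
  obtain ⟨f, hf0, hfne⟩ := separation (G (n + 1)) (hcomp (n + 1)) g₀ hg₀n1
  have hmem : f ∈ I (n + 1) := hf0
  rw [← hnn] at hmem
  exact hfne (hmem g₀ hg₀n)
end
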